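/- arXiv:math/0403003 — 2 statements merged into one kernel-verified Lean document; each statement's English description precedes it below -/
import Mathlib

section
/- Let D be a k-linear triangulated category of finite type and C a full triangulated subcategory. Then the inclusion functor C → D has a right adjoint if and only if every object X of D fits into a distinguished triangle A → X → B → A[1] with A in C and B in the right orthogonal C^⊥ (the full subcategory of objects Y with Hom(A,Y)=0 for all A in C). -/
/-! The inclusion of `S` has a right adjoint exactly when every `X` admits a coreflection: an
arrow `f : A ⟶ X` with `A ∈ S` through which every map from an object of `S` factors
uniquely (this is representability of `Hom(ι -, X)`). Given a distinguished triangle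
`A ⟶ X ⟶ B ⟶ A⟦1⟧`, the long exact sequence of `Hom(W, -)` for `W` in the shift-stable
class `S` shows that `f` is a coreflection if and only if `B` lies in `S^⊥`, and any `f`
can be completed to such a triangle. -/

open CategoryTheory Limits Pretriangulated

universe v u

/-- The set of objects of a strictly full triangulated subcategory. -/
structure IsTriangulatedSub (D : Type u) [Category.{v} D] [HasZeroObject D] [HasShift D ℤ]
    [Preadditive D] [∀ n : ℤ, (shiftFunctor D n).Additive] [Pretriangulated D]
    (S : Set D) : Prop where
  zero_mem : ∀ Z : D, Limits.IsZero Z → Z ∈ S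
  iso_closed : ∀ ⦃X Y : D⦄, (X ≅ Y) → X ∈ S → Y ∈ S
  shift_mem : ∀ (X : D) (n : ℤ), X ∈ S → (X⟦n⟧ : D) ∈ S
  ext_mem : ∀ (T : Triangle D), T ∈ (distTriang D) → T.obj₁ ∈ S → T.obj₃ ∈ S → T.obj₂ ∈ S

/-- Right orthogonal `S^⊥`: objects `Y` with `Hom(A, Y) = 0` for all `A ∈ S`. -/
def rightOrth (D : Type u) [Category.{v} D] [Preadditive D] (S : Set D) : Set D :=
  {Y | ∀ (A : D), A ∈ S → ∀ f : A ⟶ Y, f = 0}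

section

variable {D : Type u} [Category.{v} D]

def IsCoreflection (S : Set D) {A X : D} (f : A ⟶ X) : Prop :=
  ∀ W ∈ S, Function.Bijective (fun v : W ⟶ A => v ≫ f)

lemma isRepresentable_ι_op_comp_yoneda_iff (S : Set D) (X : D) :
    ((ObjectProperty.ι (· ∈ S)).op ⋙ yoneda.obj X).IsRepresentable ↔
      ∃ A ∈ S, ∃ f : A ⟶ X, IsCoreflection S f := by
  constructor
  · rintro ⟨A, ⟨e⟩⟩
    refine ⟨A.obj, A.property, e.homEquiv (𝟙 A), fun W hW => ?_⟩
    have hcomp : (fun v : W ⟶ A.obj => v ≫ e.homEquiv (𝟙 A)) =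
        e.homEquiv ∘ (ObjectProperty.fullyFaithfulι _).preimage (X := ⟨W, hW⟩) := by
      funext v
      have h := e.homEquiv_comp (X := ⟨W, hW⟩) (ObjectProperty.homMk v) (𝟙 A)
      rw [Category.comp_id] at h
      exact h.symm
    rw [hcomp]
    exact e.homEquiv.bijective.comp (ObjectProperty.fullyFaithfulι _).homEquiv.symm.bijective
  · rintro ⟨A, hA, f, hf⟩
    exact Functor.RepresentableBy.isRepresentable (Y := ⟨A, hA⟩)
      { homEquiv := fun {W} => (ObjectProperty.fullyFaithfulι _).homEquiv.trans
          (Equiv.ofBijective _ (hf W.obj W.property))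
        homEquiv_comp := fun _ _ => Category.assoc _ _ _ }

lemma isLeftAdjoint_ι_iff (S : Set D) :
    (ObjectProperty.ι (· ∈ S)).IsLeftAdjoint ↔
      ∀ X : D, ∃ A ∈ S, ∃ f : A ⟶ X, IsCoreflection S f := by
  simp only [← isRepresentable_ι_op_comp_yoneda_iff, ← Functor.rightAdjointObjIsDefined_iff,
    Functor.isLeftAdjoint_iff_rightAdjointObjIsDefined_eq_top]
  exact ⟨fun h X => h ▸ trivial, fun h => funext fun X => eq_true (h X)⟩

end

section

variable {D : Type u} [Category.{v} D] [HasShift D ℤ]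
  {S : Set D} (hS : ∀ (X : D) (n : ℤ), X ∈ S → (X⟦n⟧ : D) ∈ S)

include hS in
lemma IsCoreflection.shift {A X : D} {f : A ⟶ X} (hf : IsCoreflection S f) (n : ℤ) :
    IsCoreflection S (f⟦n⟧') := by
  intro W hW
  let adj := (shiftEquiv D n).symm.toAdjunction
  have hcomp : (fun v : W ⟶ A⟦n⟧ => v ≫ f⟦n⟧') =
      adj.homEquiv W X ∘ (fun v => v ≫ f) ∘ (adj.homEquiv W A).symm := by
    funext v
    show _ = adj.homEquiv W X ((adj.homEquiv W A).symm v ≫ f)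
    rw [adj.homEquiv_naturality_right]
    exact congrArg (· ≫ f⟦n⟧') ((adj.homEquiv W A).apply_symm_apply v).symm
  rw [hcomp]
  exact (adj.homEquiv W X).bijective.comp
    ((hf _ (hS W (-n) hW)).comp (adj.homEquiv W A).symm.bijective)

variable [Preadditive D]

include hS in
lemma shift_mem_rightOrth {B : D}
    (hB : B ∈ rightOrth D S) (n : ℤ) : (B⟦n⟧ : D) ∈ rightOrth D S := by
  intro W hW φ
  obtain ⟨ψ, rfl⟩ := ((shiftEquiv D n).symm.toAdjunction.homEquiv W B).surjective φ
  rw [Adjunction.homEquiv_unit, hB _ (hS W (-n) hW) ψ]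
  exact (congrArg _ (Functor.map_zero _ _ _)).trans comp_zero

variable [HasZeroObject D] [∀ n : ℤ, (shiftFunctor D n).Additive] [Pretriangulated D]

include hS in
lemma isCoreflection_iff_mem_rightOrth {A X B : D} {f : A ⟶ X} {g : X ⟶ B}
    {h : B ⟶ A⟦(1 : ℤ)⟧} (hT : Triangle.mk f g h ∈ distTriang D) :
    IsCoreflection S f ↔ B ∈ rightOrth D S := by
  have hfg : f ≫ g = 0 := comp_distTriang_mor_zero₁₂ _ hT
  have hhf : h ≫ f⟦(1 : ℤ)⟧' = 0 := comp_distTriang_mor_zero₃₁ _ hT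
  constructor
  · intro hf W hW φ
    have hφh : φ ≫ h = 0 := (hf.shift hS 1 W hW).injective (by
      simp only [Category.assoc, hhf, comp_zero, zero_comp])
    obtain ⟨u, rfl⟩ := Triangle.coyoneda_exact₃ _ hT φ hφh
    obtain ⟨v, rfl⟩ := (hf W hW).surjective u
    show (v ≫ f) ≫ g = 0
    rw [Category.assoc, hfg, comp_zero]
  · intro hB W hW
    refine ⟨(injective_iff_map_eq_zero (Preadditive.rightComp W f)).2
      fun v (hv : v ≫ f = 0) => ?_, fun u => ?_⟩
    · obtain ⟨t, rfl⟩ := Triangle.coyoneda_exact₂ _ (inv_rot_of_distTriang _ hT) v hv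
      rw [shift_mem_rightOrth hS hB (-1) W hW t]
      exact zero_comp
    · obtain ⟨v, hv⟩ := Triangle.coyoneda_exact₂ _ hT u (hB W hW _)
      exact ⟨v, hv.symm⟩

end

theorem stmt0 (k : Type*) [Field k]
    (D : Type u) [Category.{v} D] [Preadditive D] [CategoryTheory.Linear k D]
    [HasZeroObject D] [HasShift D ℤ] [∀ n : ℤ, (shiftFunctor D n).Additive]
    [Pretriangulated D]
    -- finite type: each graded piece of `Hom^•(X,Y)` is finite dimensional ...
    (hft : ∀ X Y : D, ∀ n : ℤ, FiniteDimensional k (X ⟶ (Y⟦n⟧ : D)))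
    -- ... and all but finitely many graded pieces vanish
    (hft' : ∀ X Y : D, ∃ N : ℕ, ∀ n : ℤ, (N : ℤ) < |n| → ∀ f : X ⟶ (Y⟦n⟧ : D), f = 0)
    (S : Set D) (hS : IsTriangulatedSub D S) :
    (ObjectProperty.ι (· ∈ S)).IsLeftAdjoint ↔
      ∀ X : D, ∃ (A B : D) (_ : A ∈ S) (_ : B ∈ rightOrth D S)
        (f : A ⟶ X) (g : X ⟶ B) (h : B ⟶ (A⟦(1:ℤ)⟧ : D)),
        Triangle.mk f g h ∈ distTriang D := by
  rw [isLeftAdjoint_ι_iff]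
  refine forall_congr' fun X =>
    ⟨fun ⟨A, hA, f, hf⟩ => ?_, fun ⟨A, B, hA, hB, f, g, h, hT⟩ => ?_⟩
  · obtain ⟨B, g, h, hT⟩ := distinguished_cocone_triangle f
    exact ⟨A, B, hA, (isCoreflection_iff_mem_rightOrth hS.shift_mem hT).1 hf, f, g, h, hT⟩
  · exact ⟨A, hA, f, (isCoreflection_iff_mem_rightOrth hS.shift_mem hT).2 hB⟩
end

section
/- If C is a right admissible full triangulated subcategory of a triangulated category D, then the right orthogonal C^⊥ is left admissible in D, i.e., the inclusion C^⊥ → D has a left adjoint. -/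
open CategoryTheory Limits Pretriangulated

universe v u

/-!
Let `G` be the right adjoint of the inclusion of `C`. For `X : D`, complete the counit
`G X ⟶ X` to a distinguished triangle `G X ⟶ X ⟶ Z ⟶ (G X)⟦1⟧`. For `B ∈ C` the counit
induces bijections `Hom(B, G X) ≃ Hom(B, X)` and, by adjunction with the shift,
`Hom(B, (G X)⟦1⟧) ≃ Hom(B, X⟦1⟧)`, so the long exact `Hom(B, -)`-sequence forces
`Hom(B, Z) = 0`, i.e. `Z ∈ C^⊥`. On the other hand the cone of `X ⟶ Z` is `(G X)⟦1⟧ ∈ C`, so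
`Hom(-, Y)` inverts it for every `Y ∈ C^⊥`. Hence `X ⟶ Z` is a reflection of `X` into `C^⊥`.
-/

namespace IsTriangulatedSub

variable {D : Type u} [Category.{v} D] [Preadditive D] [HasZeroObject D] [HasShift D ℤ]
  [∀ n : ℤ, (shiftFunctor D n).Additive] [Pretriangulated D] {S : Set D}

open ZeroObject in
lemma isTriangulated (hS : IsTriangulatedSub D S) : ObjectProperty.IsTriangulated (· ∈ S) :=
  have : ObjectProperty.IsClosedUnderIsomorphisms (· ∈ S) := ⟨fun e h => hS.iso_closed e h⟩
  { exists_zero := ⟨0, isZero_zero D, hS.zero_mem _ (isZero_zero D)⟩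
    isStableUnderShiftBy := fun n => ⟨fun X hX => hS.shift_mem X n hX⟩
    toIsTriangulatedClosed₂ := .mk' hS.ext_mem }

end IsTriangulatedSub

lemma rightOrth_eq_rightOrthogonal {D : Type u} [Category.{v} D] [Preadditive D] (S : Set D) :
    (· ∈ rightOrth D S) = ObjectProperty.rightOrthogonal (· ∈ S) := by
  ext Y
  exact ⟨fun hY _ f hX => hY _ hX f, fun hY _ hX f => hY f hX⟩

namespace CategoryTheory.ObjectProperty

section

variable {C D : Type*} [Category* C] [Category* D]

lemma isColocal.map_of_adjunction {P : ObjectProperty C} {Q : ObjectProperty D}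
    {L : D ⥤ C} {R : C ⥤ D} (adj : L ⊣ R) (hL : ∀ Y, Q Y → P (L.obj Y))
    {X X' : C} {f : X ⟶ X'} (hf : P.isColocal f) : Q.isColocal (R.map f) := by
  intro Y hY
  have : (fun g : Y ⟶ R.obj X => g ≫ R.map f) =
      adj.homEquiv Y X' ∘ (fun c => c ≫ f) ∘ (adj.homEquiv Y X).symm := by
    ext g
    rw [Function.comp_apply, Function.comp_apply, Adjunction.homEquiv_naturality_right,
      Equiv.apply_symm_apply]
  rw [this]
  exact (adj.homEquiv Y X').bijective.comp
    ((hf _ (hL Y hY)).comp (adj.homEquiv Y X).symm.bijective)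

lemma isColocal_counit_app (P : ObjectProperty C) {G : C ⥤ P.FullSubcategory} (adj : P.ι ⊣ G)
    (X : C) : P.isColocal (adj.counit.app X) :=
  fun Y hY => isColocal_adj_counit_app adj X Y ⟨⟨Y, hY⟩, rfl⟩

lemma isRightAdjoint_ι_of_exists_isLocal (Q : ObjectProperty C)
    (h : ∀ X, ∃ (Z : C) (g : X ⟶ Z), Q Z ∧ Q.isLocal g) : Q.ι.IsRightAdjoint :=
  Functor.isRightAdjoint_of_leftAdjointObjIsDefined_eq_top <| top_unique fun X _ => by
    obtain ⟨Z, g, hZ, hg⟩ := h X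
    exact Functor.CorepresentableBy.isCorepresentable (X := (⟨Z, hZ⟩ : Q.FullSubcategory))
      { homEquiv {Y} := Q.fullyFaithfulι.homEquiv.trans (hg.homEquiv _ Y.property)
        homEquiv_comp _ _ := by simp [Functor.FullyFaithful.homEquiv] }

end

variable {C : Type*} [Category C] [Preadditive C] [HasZeroObject C] [HasShift C ℤ]
  [∀ n : ℤ, (shiftFunctor C n).Additive] [Pretriangulated C]

lemma rightOrthogonal_obj₃_of_isColocal_mor₁ (P : ObjectProperty C)
    [P.IsStableUnderShiftBy (-1 : ℤ)] (T : Triangle C) (hT : T ∈ distTriang C)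
    (hf : P.isColocal T.mor₁) : P.rightOrthogonal T.obj₃ := by
  intro B b hB
  have hf₁ : P.isColocal (T.mor₁⟦(1 : ℤ)⟧') :=
    hf.map_of_adjunction (shiftEquiv C (1 : ℤ)).symm.toAdjunction
      (fun Y hY => P.le_shift (-1) Y hY)
  have hb₃ : b ≫ T.mor₃ = 0 :=
    (hf₁ B hB).injective (by simp [comp_distTriang_mor_zero₃₁ _ hT])
  obtain ⟨c, rfl⟩ := Triangle.coyoneda_exact₃ T hT b hb₃
  obtain ⟨d, rfl⟩ := (hf B hB).surjective c
  simp [comp_distTriang_mor_zero₁₂ _ hT]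

end CategoryTheory.ObjectProperty

theorem stmt1
    (D : Type u) [Category.{v} D] [Preadditive D]
    [HasZeroObject D] [HasShift D ℤ] [∀ n : ℤ, (shiftFunctor D n).Additive]
    [Pretriangulated D]
    (S : Set D) (hS : IsTriangulatedSub D S)
    (hadm : (ObjectProperty.ι (· ∈ S)).IsLeftAdjoint) :
    (ObjectProperty.ι (· ∈ rightOrth D S)).IsRightAdjoint := by
  have := hS.isTriangulated
  let adj := Adjunction.ofIsLeftAdjoint (ObjectProperty.ι (· ∈ S))
  rw [rightOrth_eq_rightOrthogonal]
  refine ObjectProperty.isRightAdjoint_ι_of_exists_isLocal _ fun X => ?_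
  obtain ⟨Z, g, _, hT⟩ := distinguished_cocone_triangle (adj.counit.app X)
  have hZ := ObjectProperty.rightOrthogonal_obj₃_of_isColocal_mor₁ _ _ hT
    (ObjectProperty.isColocal_counit_app _ adj X)
  refine ⟨Z, g, hZ, fun Y hY => ?_⟩
  rw [← ObjectProperty.isLocal_trW] at hY
  exact hY _ (ObjectProperty.trW.mk' _ hT
    ((ObjectProperty.ι (· ∈ S)).rightAdjoint.obj X).property)
end
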